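/- arXiv:2505.11660 — 2 statements merged into one kernel-verified Lean document; each statement's English description precedes it below -/
import Mathlib

section
/- Let p > 0, μ > 0, f, g, h, k be reals with f² + g² < 1, and let λ_p, λ_f, λ_g, λ_h, λ_k, λ_L, λ_m, m > 0, c > 0 be reals. If G is not identically zero on (−π, π), then the reduced switching function S has at most 6 zeros in (−π, π). (Hence the averaged minimum-fuel switching function has at most six roots per revolution.) -/
noncomputable def wfun (f g L : ℝ) : ℝ := 1 + f * Real.cos L + g * Real.sin L

noncomputable def Rfun (p μ lf lg L : ℝ) : ℝ :=
  Real.sqrt (p / μ) * (lf * Real.sin L - lg * Real.cos L)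

noncomputable def Tfun (p μ f g lp lf lg L : ℝ) : ℝ :=
  Real.sqrt (p / μ) * (1 / wfun f g L) *
    (2 * p * lp + lf * ((wfun f g L + 1) * Real.cos L + f)
      + lg * ((wfun f g L + 1) * Real.sin L + g))

noncomputable def Nfun (p μ f g h k lf lg lh lk lL L : ℝ) : ℝ :=
  Real.sqrt (p / μ) * (1 / wfun f g L) *
    ((lL + f * lg - g * lf) * (h * Real.sin L - k * Real.cos L)
      + ((1 + h ^ 2 + k ^ 2) / 2) * (lh * Real.cos L + lk * Real.sin L))

noncomputable def Gfun (p μ f g h k lp lf lg lh lk lL lm m c L : ℝ) : ℝ :=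
  c ^ 2 * (Rfun p μ lf lg L ^ 2 + Tfun p μ f g lp lf lg L ^ 2
    + Nfun p μ f g h k lf lg lh lk lL L ^ 2) - m ^ 2 * (1 - lm) ^ 2

noncomputable def Sfun (p μ f g h k lp lf lg lh lk lL lm m c L : ℝ) : ℝ :=
  1 - lm - (c / m) * Real.sqrt (Rfun p μ lf lg L ^ 2 + Tfun p μ f g lp lf lg L ^ 2
    + Nfun p μ f g h k lf lg lh lk lL L ^ 2)

/-!
Under the substitution `t = tan (L / 2)`, an expression `a + b cos L + c sin L` becomes
`(1 + t²)⁻¹` times a quadratic in `t`. The numerator of `T` splits as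
`w · (λ_f cos L + λ_g sin L) + B` with `B` of that affine form, and
`(λ_f sin L - λ_g cos L)² + (λ_f cos L + λ_g sin L)² = λ_f² + λ_g²`, so `μ w² G` is a
trigonometric polynomial of degree three rather than four. Hence `μ (1 + t²)³ w² G` is a
polynomial of degree at most six in `t`; it is nonzero because `G` is not identically zero,
every zero of `S` is a zero of `G`, and `L ↦ tan (L / 2)` is injective on `(-π, π)`.
-/

open Polynomial Real Set

lemma Polynomial.finite_and_ncard_le_natDegree_of_injOn {R α : Type*} [CommRing R] [IsDomain R]
    {P : R[X]} (hP : P ≠ 0) {s : Set α} {φ : α → R} (hφ : s.InjOn φ)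
    (hroot : ∀ x ∈ s, P.IsRoot (φ x)) : s.Finite ∧ s.ncard ≤ P.natDegree := by
  have hmaps : MapsTo φ s (P.rootSet R) := fun x hx ↦
    (mem_rootSet_of_ne hP).2 (by simpa using hroot x hx)
  refine ⟨(P.rootSet_finite R).of_injOn hmaps hφ, ?_⟩
  calc s.ncard ≤ (P.rootSet R).ncard :=
        ncard_le_ncard_of_injOn φ hmaps hφ (P.rootSet_finite R)
    _ ≤ P.natDegree := P.ncard_rootSet_le R

lemma Real.injOn_tan_half : (Ioo (-π) π).InjOn fun x ↦ tan (x / 2) := fun x hx y hy hxy ↦ by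
  have hhalf : x / 2 = y / 2 :=
    injOn_tan ⟨by linarith [hx.1], by linarith [hx.2]⟩
      ⟨by linarith [hy.1], by linarith [hy.2]⟩ hxy
  linarith

lemma Real.cos_ne_neg_one_of_mem_Ioo {x : ℝ} (hx : x ∈ Ioo (-π) π) : cos x ≠ -1 := by
  have hpos : 0 < cos (x / 2) := cos_pos_of_mem_Ioo ⟨by linarith [hx.1], by linarith [hx.2]⟩
  have hdouble : cos x = 2 * cos (x / 2) ^ 2 - 1 := by
    rw [← cos_two_mul, mul_div_cancel₀ x two_ne_zero]
  nlinarith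

noncomputable def halfAngleNumerator (a b c : ℝ) : ℝ[X] :=
  C (a + b) + C (2 * c) * X + C (a - b) * X ^ 2

lemma eval_tan_half_halfAngleNumerator (a b c : ℝ) {x : ℝ} (hx : cos x ≠ -1) :
    (halfAngleNumerator a b c).eval (tan (x / 2)) =
      (1 + tan (x / 2) ^ 2) * (a + b * cos x + c * sin x) := by
  have hs : 1 + tan (x / 2) ^ 2 ≠ 0 := by positivity
  rw [cos_eq_two_mul_tan_half_div_one_sub_tan_half_sq x hx,
    sin_eq_two_mul_tan_half_div_one_add_tan_half_sq x]
  simp only [halfAngleNumerator, eval_add, eval_mul, eval_C, eval_X, eval_pow]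
  field_simp
  ring

lemma wfun_pos {f g : ℝ} (hfg : f ^ 2 + g ^ 2 < 1) (L : ℝ) : 0 < wfun f g L := by
  have hcs : (f * cos L + g * sin L) ^ 2 < 1 := by
    nlinarith [sq_nonneg (f * sin L - g * cos L), sin_sq_add_cos_sq L]
  have hlt := abs_lt.1 ((sq_lt_one_iff_abs_lt_one _).1 hcs)
  unfold wfun
  linarith [hlt.1]

section
variable (p μ f g h k lp lf lg lh lk lL lm m c : ℝ)

lemma mul_wfun_sq_mul_Gfun (hp : 0 ≤ p) (hμ : 0 < μ) {L : ℝ} (hw : wfun f g L ≠ 0) :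
    μ * wfun f g L ^ 2 * Gfun p μ f g h k lp lf lg lh lk lL lm m c L =
      c ^ 2 * p * ((lf ^ 2 + lg ^ 2) * wfun f g L ^ 2
        + 2 * wfun f g L * (lf * cos L + lg * sin L)
            * ((2 * p * lp + f * lf + g * lg) + lf * cos L + lg * sin L)
        + ((2 * p * lp + f * lf + g * lg) + lf * cos L + lg * sin L) ^ 2
        + (((1 + h ^ 2 + k ^ 2) / 2 * lh - k * (lL + f * lg - g * lf)) * cos L
            + (h * (lL + f * lg - g * lf) + (1 + h ^ 2 + k ^ 2) / 2 * lk) * sin L) ^ 2)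
      - μ * m ^ 2 * (1 - lm) ^ 2 * wfun f g L ^ 2 := by
  have hsqrt : sqrt (p / μ) ^ 2 = p / μ := sq_sqrt (div_nonneg hp hμ.le)
  have hT : 2 * p * lp + lf * ((wfun f g L + 1) * cos L + f) + lg * ((wfun f g L + 1) * sin L + g)
      = wfun f g L * (lf * cos L + lg * sin L)
        + ((2 * p * lp + f * lf + g * lg) + lf * cos L + lg * sin L) := by
    ring
  have hR : (lf * sin L - lg * cos L) ^ 2 = lf ^ 2 + lg ^ 2 - (lf * cos L + lg * sin L) ^ 2 := by
    linear_combination (lf ^ 2 + lg ^ 2) * sin_sq_add_cos_sq L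
  simp only [Gfun, Rfun, Tfun, Nfun, mul_pow, hsqrt, hT, hR]
  field_simp
  ring

noncomputable def switchingPoly : ℝ[X] :=
  let K := lL + f * lg - g * lf
  let σ := (1 + h ^ 2 + k ^ 2) / 2
  let W := halfAngleNumerator 1 f g
  let A := halfAngleNumerator 0 lf lg
  let B := halfAngleNumerator (2 * p * lp + f * lf + g * lg) lf lg
  let N := halfAngleNumerator 0 (σ * lh - k * K) (h * K + σ * lk)
  C (c ^ 2 * p) * ((1 + X ^ 2) * (C (lf ^ 2 + lg ^ 2) * W ^ 2 + B ^ 2 + N ^ 2) + 2 * W * A * B)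
    - C (μ * m ^ 2 * (1 - lm) ^ 2) * (1 + X ^ 2) * W ^ 2

lemma natDegree_switchingPoly_le :
    (switchingPoly p μ f g h k lp lf lg lh lk lL lm m c).natDegree ≤ 6 := by
  simp only [switchingPoly, halfAngleNumerator]
  compute_degree

lemma eval_tan_half_switchingPoly (hp : 0 ≤ p) (hμ : 0 < μ) {L : ℝ} (hL : cos L ≠ -1)
    (hw : wfun f g L ≠ 0) :
    (switchingPoly p μ f g h k lp lf lg lh lk lL lm m c).eval (tan (L / 2)) =
      μ * (1 + tan (L / 2) ^ 2) ^ 3 * wfun f g L ^ 2 *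
        Gfun p μ f g h k lp lf lg lh lk lL lm m c L := by
  have hW : (halfAngleNumerator 1 f g).eval (tan (L / 2)) = (1 + tan (L / 2) ^ 2) * wfun f g L :=
    eval_tan_half_halfAngleNumerator 1 f g hL
  simp only [switchingPoly, eval_sub, eval_mul, eval_add, eval_pow, eval_C, eval_X, eval_one,
    eval_ofNat, hW, eval_tan_half_halfAngleNumerator _ _ _ hL]
  linear_combination (-(1 + tan (L / 2) ^ 2) ^ 3) *
    mul_wfun_sq_mul_Gfun p μ f g h k lp lf lg lh lk lL lm m c hp hμ hw

lemma Gfun_eq_zero_of_Sfun_eq_zero (hm : m ≠ 0) {L : ℝ}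
    (hS : Sfun p μ f g h k lp lf lg lh lk lL lm m c L = 0) :
    Gfun p μ f g h k lp lf lg lh lk lL lm m c L = 0 := by
  have hQ : 0 ≤ Rfun p μ lf lg L ^ 2 + Tfun p μ f g lp lf lg L ^ 2
      + Nfun p μ f g h k lf lg lh lk lL L ^ 2 := by positivity
  have hsq := congrArg (· ^ 2) (sub_eq_zero.1 hS)
  simp only [mul_pow, div_pow, sq_sqrt hQ] at hsq
  field_simp at hsq
  unfold Gfun
  linear_combination -hsq

end

theorem switching_function_at_most_six_zeros_general
    (p μ f g h k lp lf lg lh lk lL lm m c : ℝ)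
    (hp : 0 < p) (hμ : 0 < μ) (hfg : f ^ 2 + g ^ 2 < 1) (hm : 0 < m)
    (hG : ∃ L ∈ Set.Ioo (-Real.pi) Real.pi,
      Gfun p μ f g h k lp lf lg lh lk lL lm m c L ≠ 0) :
    {L ∈ Set.Ioo (-Real.pi) Real.pi |
        Sfun p μ f g h k lp lf lg lh lk lL lm m c L = 0}.Finite ∧
    {L ∈ Set.Ioo (-Real.pi) Real.pi |
        Sfun p μ f g h k lp lf lg lh lk lL lm m c L = 0}.ncard ≤ 6 := by
  set P := switchingPoly p μ f g h k lp lf lg lh lk lL lm m c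
  have hP : ∀ L ∈ Ioo (-π) π, P.eval (tan (L / 2)) = μ * (1 + tan (L / 2) ^ 2) ^ 3 *
      wfun f g L ^ 2 * Gfun p μ f g h k lp lf lg lh lk lL lm m c L :=
    fun L hL ↦ eval_tan_half_switchingPoly p μ f g h k lp lf lg lh lk lL lm m c hp.le hμ
      (cos_ne_neg_one_of_mem_Ioo hL) (wfun_pos hfg L).ne'
  have hP0 : P ≠ 0 := by
    obtain ⟨L, hL, hGL⟩ := hG
    intro h0
    have hw := wfun_pos hfg L
    have hzero := hP L hL
    rw [h0, eval_zero, eq_comm] at hzero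
    exact hGL ((mul_eq_zero.1 hzero).resolve_left (by positivity))
  have hroots : ∀ L ∈ {L ∈ Ioo (-π) π | Sfun p μ f g h k lp lf lg lh lk lL lm m c L = 0},
      P.IsRoot (tan (L / 2)) := fun L ⟨hL, hS⟩ ↦ by
    rw [IsRoot, hP L hL,
      Gfun_eq_zero_of_Sfun_eq_zero p μ f g h k lp lf lg lh lk lL lm m c hm.ne' hS, mul_zero]
  obtain ⟨hfin, hcard⟩ := finite_and_ncard_le_natDegree_of_injOn hP0
    (injOn_tan_half.mono fun _ hL ↦ hL.1) hroots
  exact ⟨hfin, hcard.trans (natDegree_switchingPoly_le ..)⟩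

/-- If `G` is not identically zero on `(-π, π)`, then the reduced
switching function `S` has at most 6 zeros in `(-π, π)`: the averaged
minimum-fuel switching function has at most six roots per revolution. -/
theorem switching_function_at_most_six_zeros
    (p μ f g h k lp lf lg lh lk lL lm m c : ℝ)
    (hp : 0 < p) (hμ : 0 < μ) (hfg : f ^ 2 + g ^ 2 < 1) (hm : 0 < m) (hc : 0 < c)
    (hG : ∃ L ∈ Set.Ioo (-Real.pi) Real.pi,
      Gfun p μ f g h k lp lf lg lh lk lL lm m c L ≠ 0) :
    {L ∈ Set.Ioo (-Real.pi) Real.pi |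
        Sfun p μ f g h k lp lf lg lh lk lL lm m c L = 0}.Finite ∧
    {L ∈ Set.Ioo (-Real.pi) Real.pi |
        Sfun p μ f g h k lp lf lg lh lk lL lm m c L = 0}.ncard ≤ 6 :=
  switching_function_at_most_six_zeros_general p μ f g h k lp lf lg lh lk lL lm m c hp hμ hfg hm hG
end

section
/- Let E : ℝ × ℝ → ℝ be twice continuously differentiable on a neighborhood of (x₀, L₀) with E(x₀, L₀) = 0, ∂E/∂L(x₀, L₀) = 0, ∂²E/∂L²(x₀, L₀) > 0, and ∂E/∂x(x₀, L₀) < 0, and let L₋ < L₊ be the two continuously differentiable root branches of E near L₀ defined for x ∈ (x₀, x₀ + δ). Let φ : ℝ → ℝ be differentiable at 0 with φ(0) = 1 and φ'(0) = 0. Then (1 − φ(L₊(x) − L₋(x))) · (L₊'(x) − L₋'(x)) → 0 as x → x₀⁺. (Raising the in-eclipse thrust floor to 1 as the eclipse arc length tends to zero, via any modification φ with φ(0) = 1 and φ'(0) = 0, removes the singularity in the averaged costate dynamics caused by vanishing eclipse arcs.) -/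
open Filter Topology Set

/-!
Write `Δ = L₊ - L₋`. Since `φ(0) = 1` and `φ'(0) = 0`, `(1 - φ Δ) / Δ → 0`, so it suffices that
`Δ · (L₊' - L₋')` stays bounded. Implicit differentiation of `E(x, L±(x)) = 0` gives
`L±' = -∂ₓE / ∂_L E` at `(x, L±)`. Near `(x₀, L₀)` the slice `E(x, ·)` is uniformly strongly convex
(`∂²_L E ≥ m > 0`) and vanishes at both ends of `[L₋, L₊]`, which forces `|∂_L E| ≥ m Δ / 2` at
both ends; as `∂ₓE` is bounded there, `Δ · |L±'| ≤ 2 M / m`.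
-/

section OneVariable

variable {f f' f'' : ℝ → ℝ} {a b m : ℝ}

theorem monotoneOn_Icc_of_hasDerivAt_nonneg {u u' : ℝ → ℝ}
    (hu : ∀ t ∈ Icc a b, HasDerivAt u (u' t) t) (hu' : ∀ t ∈ Icc a b, 0 ≤ u' t) :
    MonotoneOn u (Icc a b) :=
  monotoneOn_of_hasDerivWithinAt_nonneg (convex_Icc a b)
    (fun t ht => (hu t ht).continuousAt.continuousWithinAt)
    (fun t ht => (hu t (interior_subset ht)).hasDerivWithinAt)
    (fun t ht => hu' t (interior_subset ht))

variable (hf : ∀ t ∈ Icc a b, HasDerivAt f (f' t) t)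
  (hf' : ∀ t ∈ Icc a b, HasDerivAt f' (f'' t) t) (hm : ∀ t ∈ Icc a b, m ≤ f'' t)
include hf hf' hm

theorem add_deriv_mul_add_sq_le_of_le_deriv2 (hab : a ≤ b) :
    f a + f' a * (b - a) + m / 2 * (b - a) ^ 2 ≤ f b ∧
      f b - f' b * (b - a) + m / 2 * (b - a) ^ 2 ≤ f a := by
  have hslope : MonotoneOn (fun t => f' t - m * t) (Icc a b) :=
    monotoneOn_Icc_of_hasDerivAt_nonneg
      (fun t ht => ((hf' t ht).sub ((hasDerivAt_id t).const_mul m)).congr_deriv (by ring))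
      (fun t ht => sub_nonneg.2 (hm t ht))
  have ha : a ∈ Icc a b := left_mem_Icc.2 hab
  have hb : b ∈ Icc a b := right_mem_Icc.2 hab
  constructor
  · have hu := monotoneOn_Icc_of_hasDerivAt_nonneg
      (u := fun t => f t - f' a * t - m / 2 * (t - a) ^ 2) (u' := fun t => f' t - f' a - m * (t - a))
      (fun t ht => (((hf t ht).sub ((hasDerivAt_id t).const_mul (f' a))).sub
        ((((hasDerivAt_id t).sub_const a).pow 2).const_mul (m / 2))).congr_deriv (by simp only [id]; ring))
      (fun t ht => by linarith [hslope ha ht ht.1]) ha hb hab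
    simp only at hu
    linarith
  · have hv := monotoneOn_Icc_of_hasDerivAt_nonneg
      (u := fun t => f' b * t + m / 2 * (t - b) ^ 2 - f t) (u' := fun t => f' b + m * (t - b) - f' t)
      (fun t ht => ((((hasDerivAt_id t).const_mul (f' b)).add
        ((((hasDerivAt_id t).sub_const b).pow 2).const_mul (m / 2))).sub (hf t ht)).congr_deriv
          (by simp only [id]; ring))
      (fun t ht => by linarith [hslope ht hb ht.2]) ha hb hab
    simp only at hv
    linarith

theorem half_mul_sub_le_abs_deriv_of_eq_zero (hab : a < b) (ha : f a = 0) (hb : f b = 0) :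
    m / 2 * (b - a) ≤ |f' a| ∧ m / 2 * (b - a) ≤ |f' b| := by
  obtain ⟨hleft, hright⟩ := add_deriv_mul_add_sq_le_of_le_deriv2 hf hf' hm hab.le
  rw [ha, hb] at hleft hright
  have hba : 0 < b - a := sub_pos.2 hab
  constructor
  · nlinarith [neg_abs_le (f' a)]
  · nlinarith [le_abs_self (f' b)]

end OneVariable

section PartialDerivatives

variable {F : Type*} [NormedAddCommGroup F] [NormedSpace ℝ F] {E : ℝ × ℝ → F}

noncomputable def partialFst (E : ℝ × ℝ → F) (z : ℝ × ℝ) : F := fderiv ℝ E z (1, 0)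

noncomputable def partialSnd (E : ℝ × ℝ → F) (z : ℝ × ℝ) : F := fderiv ℝ E z (0, 1)

theorem DifferentiableAt.hasDerivAt_partialSnd {x y : ℝ} (h : DifferentiableAt ℝ E (x, y)) :
    HasDerivAt (fun y => E (x, y)) (partialSnd E (x, y)) y :=
  h.hasFDerivAt.comp_hasDerivAt y ((hasDerivAt_const y x).prodMk (hasDerivAt_id y))

theorem ContDiffAt.partialFst {m n : WithTop ℕ∞} {z : ℝ × ℝ} (h : ContDiffAt ℝ n E z)
    (hmn : m + 1 ≤ n) : ContDiffAt ℝ m (partialFst E) z :=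
  (h.fderiv_right hmn).clm_apply contDiffAt_const

theorem ContDiffAt.partialSnd {m n : WithTop ℕ∞} {z : ℝ × ℝ} (h : ContDiffAt ℝ n E z)
    (hmn : m + 1 ≤ n) : ContDiffAt ℝ m (partialSnd E) z :=
  (h.fderiv_right hmn).clm_apply contDiffAt_const

theorem partialFst_add_deriv_smul_partialSnd_eq_zero {L : ℝ → ℝ} {x : ℝ}
    (hE : DifferentiableAt ℝ E (x, L x)) (hL : DifferentiableAt ℝ L x)
    (hzero : ∀ᶠ y in 𝓝 x, E (y, L y) = 0) :
    partialFst E (x, L x) + deriv L x • partialSnd E (x, L x) = 0 := by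
  have hcomp := hE.hasFDerivAt.comp_hasDerivAt x ((hasDerivAt_id x).prodMk hL.hasDerivAt)
  have hconst : HasDerivAt (fun y => E (y, L y)) 0 x :=
    (hasDerivAt_const x (0 : F)).congr_of_eventuallyEq hzero
  have hsplit : ((1 : ℝ), deriv L x) = (1, 0) + deriv L x • ((0 : ℝ), (1 : ℝ)) := by simp
  calc partialFst E (x, L x) + deriv L x • partialSnd E (x, L x)
      = fderiv ℝ E (x, L x) (1, deriv L x) := by
        rw [hsplit, map_add, map_smul, partialFst, partialSnd]
    _ = 0 := hcomp.unique hconst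

theorem deriv_deriv_slice_eq_partialSnd_partialSnd {x y : ℝ}
    (hE : ∀ᶠ z in 𝓝 (x, y), DifferentiableAt ℝ E z)
    (hE' : DifferentiableAt ℝ (partialSnd E) (x, y)) :
    deriv (deriv fun y => E (x, y)) y = partialSnd (partialSnd E) (x, y) := by
  have hslice : deriv (fun y => E (x, y)) =ᶠ[𝓝 y] fun y => partialSnd E (x, y) := by
    have hcont : ContinuousAt (fun y : ℝ => (x, y)) y := by fun_prop
    filter_upwards [hcont.eventually hE] with y' hy' using hy'.hasDerivAt_partialSnd.deriv
  rw [hslice.deriv_eq, hE'.hasDerivAt_partialSnd.deriv]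

end PartialDerivatives

theorem eventually_partial_bounds {E : ℝ × ℝ → ℝ} {z₀ : ℝ × ℝ}
    (hE : ∀ᶠ z in 𝓝 z₀, ContDiffAt ℝ 2 E z) (hq : 0 < partialSnd (partialSnd E) z₀) :
    ∃ m > 0, ∃ M, ∀ᶠ z in 𝓝 z₀, DifferentiableAt ℝ E z ∧ DifferentiableAt ℝ (partialSnd E) z ∧
      m ≤ partialSnd (partialSnd E) z ∧ |partialFst E z| ≤ M := by
  have hE₀ : ContDiffAt ℝ 2 E z₀ := hE.self_of_nhds
  have hsnd₂ : ContinuousAt (partialSnd (partialSnd E)) z₀ :=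
    ((hE₀.partialSnd (m := 1) (by norm_num)).partialSnd (m := 0) (by norm_num)).continuousAt
  have hfst : ContinuousAt (fun z => |partialFst E z|) z₀ :=
    (hE₀.partialFst (m := 1) (by norm_num)).continuousAt.abs
  refine ⟨_, half_pos hq, |partialFst E z₀| + 1, ?_⟩
  filter_upwards [hE, hsnd₂.eventually_const_lt (half_lt_self hq),
    hfst.eventually_lt continuousAt_const (lt_add_one _)] with z hz hz₂ hz₁
  exact ⟨hz.differentiableAt two_ne_zero,
    (hz.partialSnd (m := 1) (by norm_num)).differentiableAt one_ne_zero, hz₂.le, hz₁.le⟩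

theorem eventually_forall_mem_Icc_of_eventually_nhds_prod {X Y ι : Type*} [TopologicalSpace X]
    [TopologicalSpace Y] [LinearOrder Y] [OrderTopology Y] [NoMaxOrder Y] [NoMinOrder Y]
    {p : X × Y → Prop} {x₀ : X} {y₀ : Y} (hp : ∀ᶠ z in 𝓝 (x₀, y₀), p z)
    {l : Filter ι} {u : ι → X} {a b : ι → Y} (hu : Tendsto u l (𝓝 x₀))
    (ha : Tendsto a l (𝓝 y₀)) (hb : Tendsto b l (𝓝 y₀)) :
    ∀ᶠ i in l, ∀ y ∈ Icc (a i) (b i), p (u i, y) := by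
  rw [nhds_prod_eq] at hp
  obtain ⟨px, hpx, py, hpy, hpxy⟩ := eventually_prod_iff.1 hp
  obtain ⟨c, d, hcd, hsub⟩ := mem_nhds_iff_exists_Ioo_subset.1 hpy
  filter_upwards [hu.eventually hpx, ha.eventually (isOpen_Ioo.mem_nhds hcd),
    hb.eventually (isOpen_Ioo.mem_nhds hcd)] with i hi hai hbi y hy
  exact hpxy hi (hsub (Set.Icc_subset (Ioo c d) hai hbi hy))

theorem abs_sub_mul_deriv_sub_le {E : ℝ × ℝ → ℝ} {Lm Lp : ℝ → ℝ} {x m M : ℝ} (hm : 0 < m)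
    (hlt : Lm x < Lp x)
    (hloc : ∀ L ∈ Icc (Lm x) (Lp x), DifferentiableAt ℝ E (x, L) ∧
      DifferentiableAt ℝ (partialSnd E) (x, L) ∧ m ≤ partialSnd (partialSnd E) (x, L) ∧
      |partialFst E (x, L)| ≤ M)
    (hLm : ∀ᶠ y in 𝓝 x, E (y, Lm y) = 0) (hLp : ∀ᶠ y in 𝓝 x, E (y, Lp y) = 0)
    (hdm : DifferentiableAt ℝ Lm x) (hdp : DifferentiableAt ℝ Lp x) :
    |(Lp x - Lm x) * (deriv Lp x - deriv Lm x)| ≤ 4 * M / m := by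
  obtain ⟨hgapm, hgapp⟩ := half_mul_sub_le_abs_deriv_of_eq_zero
    (f := fun L => E (x, L)) (fun L hL => (hloc L hL).1.hasDerivAt_partialSnd)
    (fun L hL => (hloc L hL).2.1.hasDerivAt_partialSnd) (fun L hL => (hloc L hL).2.2.1)
    hlt hLm.self_of_nhds hLp.self_of_nhds
  have hderiv_mul_le : ∀ {L : ℝ → ℝ}, L x ∈ Icc (Lm x) (Lp x) → DifferentiableAt ℝ L x →
      (∀ᶠ y in 𝓝 x, E (y, L y) = 0) →
      |deriv L x| * |partialSnd E (x, L x)| ≤ M := fun {L} hL hd hzero => by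
    have himp := partialFst_add_deriv_smul_partialSnd_eq_zero (hloc _ hL).1 hd hzero
    rw [smul_eq_mul] at himp
    rw [← abs_mul, show deriv L x * partialSnd E (x, L x) = -partialFst E (x, L x) by linarith,
      abs_neg]
    exact (hloc _ hL).2.2.2
  have hboundp := hderiv_mul_le (right_mem_Icc.2 hlt.le) hdp hLp
  have hboundm := hderiv_mul_le (left_mem_Icc.2 hlt.le) hdm hLm
  have hΔ : 0 < Lp x - Lm x := sub_pos.2 hlt
  rw [abs_mul, abs_of_pos hΔ, le_div_iff₀ hm]
  calc (Lp x - Lm x) * |deriv Lp x - deriv Lm x| * m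
      ≤ (Lp x - Lm x) * (|deriv Lp x| + |deriv Lm x|) * m := by
        gcongr
        exact abs_sub _ _
    _ = 2 * (|deriv Lp x| * (m / 2 * (Lp x - Lm x))) +
          2 * (|deriv Lm x| * (m / 2 * (Lp x - Lm x))) := by ring
    _ ≤ 2 * (|deriv Lp x| * |partialSnd E (x, Lp x)|) +
          2 * (|deriv Lm x| * |partialSnd E (x, Lm x)|) := by gcongr
    _ ≤ 4 * M := by linarith

theorem tendsto_sub_comp_mul_of_isBoundedUnder {ι : Type*} {l : Filter ι} {φ : ℝ → ℝ}
    {Δ D : ι → ℝ} (hφ : HasDerivAt φ 0 0) (hΔ : Tendsto Δ l (𝓝[≠] 0))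
    (hbdd : IsBoundedUnder (· ≤ ·) l fun i => |Δ i * D i|) :
    Tendsto (fun i => (φ 0 - φ (Δ i)) * D i) l (𝓝 0) := by
  have hquot : Tendsto (fun t => (φ 0 - φ t) / t) (𝓝[≠] 0) (𝓝 0) := by
    have hslope := (hasDerivAt_iff_tendsto_slope.1 hφ).neg
    rw [neg_zero] at hslope
    refine hslope.congr fun t => ?_
    rw [slope_def_field, sub_zero]
    ring
  refine ((hquot.comp hΔ).zero_mul_isBoundedUnder_le hbdd).congr' ?_
  filter_upwards [hΔ self_mem_nhdsWithin] with i (hi : Δ i ≠ 0)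
  rw [Function.comp_apply, ← mul_assoc, div_mul_cancel₀ _ hi]

theorem thrust_floor_modification_removes_singularity_general
    (E : ℝ × ℝ → ℝ) (x₀ L₀ δ : ℝ) (hδ : 0 < δ) (Lm Lp : ℝ → ℝ)
    (hC2 : ∃ U ∈ 𝓝 (x₀, L₀), ContDiffOn ℝ 2 E U)
    (hELL : 0 < deriv (deriv (fun L => E (x₀, L))) L₀)
    (hroots : ∀ x ∈ Set.Ioo x₀ (x₀ + δ),
      E (x, Lm x) = 0 ∧ E (x, Lp x) = 0 ∧ Lm x < Lp x)
    (hLm : Tendsto Lm (𝓝[>] x₀) (𝓝 L₀))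
    (hLp : Tendsto Lp (𝓝[>] x₀) (𝓝 L₀))
    (hLp' : Tendsto (deriv Lp) (𝓝[>] x₀) atTop)
    (hLm' : Tendsto (deriv Lm) (𝓝[>] x₀) atBot)
    (φ : ℝ → ℝ) (hφdiff : DifferentiableAt ℝ φ 0)
    (hφ0 : φ 0 = 1) (hφ' : deriv φ 0 = 0) :
    Tendsto (fun x => (1 - φ (Lp x - Lm x)) * (deriv Lp x - deriv Lm x))
      (𝓝[>] x₀) (𝓝 0) := by
  obtain ⟨U, hU, hEU⟩ := hC2
  have hC2at : ∀ᶠ z in 𝓝 (x₀, L₀), ContDiffAt ℝ 2 E z := by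
    filter_upwards [eventually_eventually_nhds.2 hU] with z hz using hEU.contDiffAt hz
  rw [deriv_deriv_slice_eq_partialSnd_partialSnd
    (hC2at.mono fun z hz => hz.differentiableAt two_ne_zero)
    ((hC2at.self_of_nhds.partialSnd (m := 1) (by norm_num)).differentiableAt one_ne_zero)] at hELL
  obtain ⟨m, hm, M, hloc⟩ := eventually_partial_bounds hC2at hELL
  have hIoo : ∀ᶠ x in 𝓝[>] x₀, x ∈ Ioo x₀ (x₀ + δ) := Ioo_mem_nhdsGT (by linarith)
  have hbound : ∀ᶠ x in 𝓝[>] x₀, |(Lp x - Lm x) * (deriv Lp x - deriv Lm x)| ≤ 4 * M / m := by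
    filter_upwards [eventually_forall_mem_Icc_of_eventually_nhds_prod hloc
        (tendsto_id.mono_left nhdsWithin_le_nhds) hLm hLp, hIoo,
      hLp'.eventually_ne_atTop 0, hLm'.eventually_ne_atBot 0] with x hseg hx hdp hdm
    have hnear : ∀ᶠ y in 𝓝 x, y ∈ Ioo x₀ (x₀ + δ) := isOpen_Ioo.mem_nhds hx
    -- `deriv` is `0` at non-differentiable points, so `L±' → ±∞` makes `L±` differentiable.
    exact abs_sub_mul_deriv_sub_le hm (hroots x hx).2.2 hseg
      (hnear.mono fun y hy => (hroots y hy).1) (hnear.mono fun y hy => (hroots y hy).2.1)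
      (differentiableAt_of_deriv_ne_zero hdm) (differentiableAt_of_deriv_ne_zero hdp)
  have hgap : Tendsto (fun x => Lp x - Lm x) (𝓝[>] x₀) (𝓝[≠] 0) :=
    tendsto_nhdsWithin_iff.2 ⟨by simpa using hLp.sub hLm,
      hIoo.mono fun x hx => (sub_pos.2 (hroots x hx).2.2).ne'⟩
  have hφ : HasDerivAt φ 0 0 := by simpa only [hφ'] using hφdiff.hasDerivAt
  simpa only [hφ0] using tendsto_sub_comp_mul_of_isBoundedUnder hφ hgap ⟨_, hbound⟩

/-- With the vanishing-eclipse-arc setting of the previous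
statement (C² eclipsing function `E` with degenerate root at `(x₀, L₀)` and C¹
root branches `L₋ < L₊` merging at `L₀` with derivatives blowing up to `∓∞`),
any thrust-floor modification `φ` that is differentiable at `0` with `φ(0) = 1`
and `φ'(0) = 0` removes the singularity:
`(1 - φ(L₊ - L₋)) · (L₊' - L₋') → 0` as `x → x₀⁺`. -/
theorem thrust_floor_modification_removes_singularity
    (E : ℝ × ℝ → ℝ) (x₀ L₀ δ : ℝ) (hδ : 0 < δ) (Lm Lp : ℝ → ℝ)
    (hC2 : ∃ U ∈ 𝓝 (x₀, L₀), ContDiffOn ℝ 2 E U)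
    (h0 : E (x₀, L₀) = 0)
    (hEL : deriv (fun L => E (x₀, L)) L₀ = 0)
    (hELL : 0 < deriv (deriv (fun L => E (x₀, L))) L₀)
    (hEx : deriv (fun x => E (x, L₀)) x₀ < 0)
    (hroots : ∀ x ∈ Set.Ioo x₀ (x₀ + δ),
      E (x, Lm x) = 0 ∧ E (x, Lp x) = 0 ∧ Lm x < Lp x)
    (hLmC1 : ContDiffOn ℝ 1 Lm (Set.Ioo x₀ (x₀ + δ)))
    (hLpC1 : ContDiffOn ℝ 1 Lp (Set.Ioo x₀ (x₀ + δ)))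
    (hLm : Tendsto Lm (𝓝[>] x₀) (𝓝 L₀))
    (hLp : Tendsto Lp (𝓝[>] x₀) (𝓝 L₀))
    (hLp' : Tendsto (deriv Lp) (𝓝[>] x₀) atTop)
    (hLm' : Tendsto (deriv Lm) (𝓝[>] x₀) atBot)
    (φ : ℝ → ℝ) (hφdiff : DifferentiableAt ℝ φ 0)
    (hφ0 : φ 0 = 1) (hφ' : deriv φ 0 = 0) :
    Tendsto (fun x => (1 - φ (Lp x - Lm x)) * (deriv Lp x - deriv Lm x))
      (𝓝[>] x₀) (𝓝 0) :=
  thrust_floor_modification_removes_singularity_general E x₀ L₀ δ hδ Lm Lp hC2 hELL hroots hLm hLp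
    hLp' hLm' φ hφdiff hφ0 hφ'
end
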